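/- Let a, b, c, d be pairwise distinct complex numbers with |a| = |b| = |c| = |d| = 1, ac ≠ bd and ad ≠ bc. Set w2 := (ac(b+d) − bd(a+c))/(ac − bd), w3 := (ad(b+c) − bc(a+d))/(ad − bc), p1 := ab(c − d)/(ac − bd) and p3 := cd(a − b)/(ac − bd). Suppose v1 ∈ ℂ satisfies v1 ≠ w2, |v1 − p1| = |w2 − p1| and |v1 − p3| = |w2 − p3| (i.e., v1 is the second intersection point of the circles C[a,b,w2] and C[c,d,w2]). Then |v1 − w2/2| = |w2|/2 (v1 lies on the circle with diameter [0, w2]), and the points 0, v1 and w3 are collinear (over ℝ, viewing ℂ as the real plane). -/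

import Mathlib

/-!
The centres satisfy `p1 + p3 = w2`, so `0, p1, w2, p3` is a parallelogram. Adding the two circle
equations then gives `⟪v1, v1 - w2⟫ = 0`, i.e. `v1` lies on the circle with diameter `[0, w2]`,
while subtracting them gives `⟪p3 - p1, v1 - w2⟫ = 0`. In the plane, both `v1` and `p3 - p1` are
thus orthogonal to `v1 - w2 ≠ 0`, hence parallel. Finally, `w3 = (ac - bd)/(ad - bc) • (p3 - p1)`,
and this ratio is real because `a, b, c, d` lie on the unit circle.
-/

open Complex ComplexConjugate Module RealInnerProductSpace

section InnerProductSpace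

variable {E : Type*} [NormedAddCommGroup E] [InnerProductSpace ℝ E]

theorem inner_sub_eq_zero_of_norm_sub_eq_of_add_eq {p q v w : E}
    (hp : ‖v - p‖ = ‖w - p‖) (hq : ‖v - q‖ = ‖w - q‖) (hpq : p + q = w) :
    ⟪v, v - w⟫ = 0 := by
  rw [← real_inner_add_sub_eq_zero_iff, sub_sub_sub_cancel_right] at hp hq
  have hsum : v - p + (w - p) + (v - q + (w - q)) = (2 : ℝ) • v := by
    rw [← hpq, two_smul]; abel
  have h2v : ⟪(2 : ℝ) • v, v - w⟫ = 0 := by rw [← hsum, inner_add_left, hp, hq, add_zero]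
  rwa [real_inner_smul_left, mul_eq_zero, or_iff_right two_ne_zero] at h2v

theorem collinear_zero_of_inner_eq_zero [Fact (finrank ℝ E = 2)] {u x y : E} (hu : u ≠ 0)
    (hx : ⟪x, u⟫ = 0) (hy : ⟪y, u⟫ = 0) : Collinear ℝ ({0, x, y} : Set E) := by
  have : FiniteDimensional ℝ E := .of_fact_finrank_eq_two
  have hspan : vectorSpan ℝ ({0, x, y} : Set E) ≤ (ℝ ∙ u)ᗮ := by
    rw [vectorSpan_eq_span_vsub_set_right ℝ (Set.mem_insert 0 _), Submodule.span_le]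
    rintro _ ⟨z, hz, rfl⟩
    simp only [SetLike.mem_coe, vsub_eq_sub, sub_zero,
      Submodule.mem_orthogonal_singleton_iff_inner_left]
    rcases hz with rfl | rfl | rfl
    exacts [inner_zero_left _, hx, hy]
  rw [collinear_iff_finrank_le_one]
  calc finrank ℝ (vectorSpan ℝ ({0, x, y} : Set E)) ≤ finrank ℝ (ℝ ∙ u)ᗮ :=
        Submodule.finrank_mono hspan
    _ = 1 := Submodule.finrank_orthogonal_span_singleton hu

end InnerProductSpace

theorem Complex.norm_sub_div_two_eq_iff {v w : ℂ} :
    ‖v - w / 2‖ = ‖w‖ / 2 ↔ ⟪v, v - w⟫ = 0 := by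
  rw [show ‖w‖ / 2 = ‖w / 2‖ by rw [norm_div, Complex.norm_two], ← real_inner_add_sub_eq_zero_iff,
    sub_add_cancel, sub_sub, add_halves]

theorem Complex.conj_mul_sub_mul_div_eq_of_norm_eq_one {a b c d : ℂ} (ha : ‖a‖ = 1)
    (hb : ‖b‖ = 1) (hc : ‖c‖ = 1) (hd : ‖d‖ = 1) :
    conj ((a * c - b * d) / (a * d - b * c)) = (a * c - b * d) / (a * d - b * c) := by
  have h0 : ∀ z : ℂ, ‖z‖ = 1 → z ≠ 0 := fun z hz => norm_ne_zero_iff.mp (hz ▸ one_ne_zero)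
  simp only [map_div₀, map_sub, map_mul, ← inv_eq_conj ha, ← inv_eq_conj hb, ← inv_eq_conj hc,
    ← inv_eq_conj hd]
  rw [← neg_div_neg_eq, ← mul_div_mul_left _ _ (mul_ne_zero (mul_ne_zero (h0 a ha) (h0 b hb))
    (mul_ne_zero (h0 c hc) (h0 d hd)))]
  congr 1 <;> field_simp [h0 a ha, h0 b hb, h0 c hc, h0 d hd] <;> ring

theorem second_intersection_on_diameter_circle (a b c d v1 : ℂ)
    (ha : ‖a‖ = 1) (hb : ‖b‖ = 1)
    (hc : ‖c‖ = 1) (hd : ‖d‖ = 1)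
    (h2 : a * c ≠ b * d) :
    let w2 := (a * c * (b + d) - b * d * (a + c)) / (a * c - b * d)
    let w3 := (a * d * (b + c) - b * c * (a + d)) / (a * d - b * c)
    let p1 := a * b * (c - d) / (a * c - b * d)
    let p3 := c * d * (a - b) / (a * c - b * d)
    v1 ≠ w2 →
    ‖v1 - p1‖ = ‖w2 - p1‖ →
    ‖v1 - p3‖ = ‖w2 - p3‖ →
    ‖v1 - w2 / 2‖ = ‖w2‖ / 2 ∧
    Collinear ℝ ({0, v1, w3} : Set ℂ) := by
  intro w2 w3 p1 p3 hne hp1 hp3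
  have hsum : p1 + p3 = w2 := by rw [← add_div]; ring
  have hv1 : ⟪v1, v1 - w2⟫ = 0 := inner_sub_eq_zero_of_norm_sub_eq_of_add_eq hp1 hp3 hsum
  have hperp : ⟪p3 - p1, v1 - w2⟫ = 0 :=
    EuclideanGeometry.inner_vsub_vsub_of_dist_eq_of_dist_eq (p₁ := w2)
      (by simpa only [dist_eq_norm] using hp1.symm) (by simpa only [dist_eq_norm] using hp3.symm)
  obtain ⟨r, hr⟩ := conj_eq_iff_real.mp (conj_mul_sub_mul_div_eq_of_norm_eq_one ha hb hc hd)
  have hw3 : w3 = r • (p3 - p1) := by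
    rw [real_smul, ← hr, ← sub_div, div_mul_div_comm, mul_comm (a * c - b * d),
      mul_div_mul_right _ _ (sub_ne_zero.2 h2)]
    ring
  have : Fact (finrank ℝ ℂ = 2) := finrank_real_complex_fact
  refine ⟨norm_sub_div_two_eq_iff.2 hv1,
    collinear_zero_of_inner_eq_zero (sub_ne_zero.2 hne) hv1 ?_⟩
  rw [hw3, real_inner_smul_left, hperp, mul_zero]
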